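/- arXiv:2302.10371 — 4 statements merged into one kernel-verified Lean document; each statement's English description precedes it below -/
import Mathlib

section
/- Let λ > 0 and let x₁,…,x_K ∈ ℝ^d satisfy ‖x_k‖₂ ≤ L for all k. Define Z_k = λI + ∑_{i=1}^{k-1} x_i x_iᵀ. Then ∑_{k=1}^K min{1, ‖x_k‖²_{Z_k^{-1}}} ≤ 2d log(1 + K L²/(dλ)). -/
/-!
By the matrix determinant lemma, `det Z_{k+1} = det Z_k * (1 + ‖x_k‖²_{Z_k⁻¹})`, so the product of
the factors `1 + ‖x_k‖²_{Z_k⁻¹}` telescopes to `det Z_{K+1} / λ^d`. AM-GM on the eigenvalues bounds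
this determinant by `(trace Z_{K+1} / d)^d ≤ (λ + K L² / d)^d`, and `min 1 u ≤ 2 log (1 + u)` turns
the sum of the theorem into the logarithm of that product.
-/

open Matrix Finset

theorem Matrix.det_add_vecMulVec {m α : Type*} [Fintype m] [DecidableEq m] [CommRing α]
    {A : Matrix m m α} (hA : IsUnit A.det) (u v : m → α) :
    (A + vecMulVec u v).det = A.det * (1 + v ⬝ᵥ A⁻¹ *ᵥ u) := by
  rw [vecMulVec_eq Unit, det_add_replicateCol_mul_replicateRow hA]
  congr 1
  rw [det_unique, add_apply, one_apply_eq, Matrix.mul_assoc, ← replicateCol_mulVec,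
    replicateRow_mul_replicateCol_apply]

theorem Real.prod_le_sum_div_card_pow {ι : Type*} (s : Finset ι) {z : ι → ℝ}
    (hz : ∀ i ∈ s, 0 ≤ z i) : ∏ i ∈ s, z i ≤ ((∑ i ∈ s, z i) / #s) ^ #s := by
  rcases s.eq_empty_or_nonempty with rfl | hs
  · simp
  have hcard : (0 : ℝ) < #s := by exact_mod_cast hs.card_pos
  have amgm := Real.geom_mean_le_arith_mean s (fun _ ↦ 1) z (fun _ _ ↦ zero_le_one)
    (by simpa using hcard) hz
  simp only [Real.rpow_one, sum_const, nsmul_eq_mul, mul_one, one_mul] at amgm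
  calc ∏ i ∈ s, z i = ((∏ i ∈ s, z i) ^ (#s : ℝ)⁻¹) ^ #s := by
        rw [← Real.rpow_natCast, ← Real.rpow_mul (prod_nonneg hz), inv_mul_cancel₀ hcard.ne',
          Real.rpow_one]
    _ ≤ _ := pow_le_pow_left₀ (Real.rpow_nonneg (prod_nonneg hz) _) amgm _

theorem Matrix.PosSemidef.det_le_trace_div_card_pow {n : Type*} [Fintype n] [DecidableEq n]
    {A : Matrix n n ℝ} (hA : A.PosSemidef) :
    A.det ≤ (A.trace / Fintype.card n) ^ Fintype.card n := by
  rw [hA.isHermitian.det_eq_prod_eigenvalues, hA.isHermitian.trace_eq_sum_eigenvalues]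
  simpa using Real.prod_le_sum_div_card_pow univ fun i _ ↦ hA.eigenvalues_nonneg i

theorem Real.min_one_le_two_mul_log_one_add {u : ℝ} (hu : 0 ≤ u) :
    min 1 u ≤ 2 * Real.log (1 + u) := by
  set m := min 1 u
  have hm0 : 0 ≤ m := le_min zero_le_one hu
  have hm1 : m ≤ 1 := min_le_left 1 u
  calc m ≤ 2 * (2 * m / (m + 2)) := by
        rw [mul_div_assoc', le_div_iff₀ (by positivity)]; nlinarith
    _ ≤ 2 * Real.log (1 + m) := by gcongr; exact Real.le_log_one_add_of_nonneg hm0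
    _ ≤ 2 * Real.log (1 + u) := by gcongr; exact min_le_right 1 u

theorem Fin.filter_val_lt_succ {K : ℕ} (k : Fin K) :
    univ.filter (fun i : Fin K ↦ (i : ℕ) < k + 1) =
      insert k (univ.filter (fun i : Fin K ↦ (i : ℕ) < k)) := by
  ext i
  simp [le_iff_lt_or_eq, Fin.ext_iff, or_comm]

section RegGram

variable {n : Type*} [DecidableEq n] {K : ℕ}

/-- `λ I + ∑_{i < m} x_i x_iᵀ` with `0`-based indices: the paper's `Z_k`, for the vector `x k`,
is `regGram lam x k`. -/
def regGram (lam : ℝ) (x : Fin K → n → ℝ) (m : ℕ) : Matrix n n ℝ :=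
  lam • 1 + ∑ i ∈ univ.filter (fun i : Fin K ↦ (i : ℕ) < m), vecMulVec (x i) (x i)

variable {lam : ℝ} (x : Fin K → n → ℝ)

theorem regGram_zero : regGram lam x 0 = lam • 1 := by
  simp [regGram]

theorem regGram_succ (k : Fin K) :
    regGram lam x (k + 1) = regGram lam x k + vecMulVec (x k) (x k) := by
  rw [regGram, regGram, Fin.filter_val_lt_succ, sum_insert (by simp)]
  abel

theorem regGram_of_le {m : ℕ} (hm : K ≤ m) :
    regGram lam x m = lam • 1 + ∑ i, vecMulVec (x i) (x i) := by
  rw [regGram, filter_true_of_mem fun i _ ↦ i.isLt.trans_le hm]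

variable [Fintype n]

theorem posDef_regGram (hlam : 0 < lam) (m : ℕ) : (regGram lam x m).PosDef :=
  (PosDef.one.smul hlam).add_posSemidef <|
    posSemidef_sum _ fun i _ ↦ by simpa using posSemidef_vecMulVec_self_star (x i)

theorem det_regGram (hlam : 0 < lam) {m : ℕ} (hm : m ≤ K) :
    (regGram lam x m).det = lam ^ Fintype.card n *
      ∏ k ∈ univ.filter (fun k : Fin K ↦ (k : ℕ) < m),
        (1 + x k ⬝ᵥ (regGram lam x k)⁻¹ *ᵥ x k) := by
  induction m with
  | zero => simp [regGram_zero]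
  | succ m ih =>
    obtain ⟨k, rfl⟩ : ∃ k : Fin K, (k : ℕ) = m := ⟨⟨m, hm⟩, rfl⟩
    rw [regGram_succ x k, det_add_vecMulVec (posDef_regGram x hlam k).det_pos.ne'.isUnit,
      ih k.isLt.le, Fin.filter_val_lt_succ, prod_insert (by simp)]
    ring

theorem trace_regGram :
    (regGram lam x K).trace = Fintype.card n * lam + ∑ k, x k ⬝ᵥ x k := by
  simp [regGram_of_le x le_rfl, trace_sum, trace_vecMulVec, mul_comm]

theorem prod_one_add_quadForm_regGram_le [Nonempty n] (hlam : 0 < lam) :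
    ∏ k, (1 + x k ⬝ᵥ (regGram lam x k)⁻¹ *ᵥ x k) ≤
      (1 + (∑ k, x k ⬝ᵥ x k) / (Fintype.card n * lam)) ^ Fintype.card n := by
  have amgm := (posDef_regGram x hlam K).posSemidef.det_le_trace_div_card_pow
  have htrace : (Fintype.card n * lam + ∑ k, x k ⬝ᵥ x k) / Fintype.card n =
      lam * (1 + (∑ k, x k ⬝ᵥ x k) / (Fintype.card n * lam)) := by
    field_simp
  rw [det_regGram x hlam le_rfl, filter_true_of_mem fun k _ ↦ k.isLt, trace_regGram, htrace,
    mul_pow] at amgm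
  exact le_of_mul_le_mul_left amgm (by positivity)

end RegGram

theorem stmt_3_general (d K : ℕ) (hd : 0 < d) (lam L : ℝ) (hlam : 0 < lam)
    (x : Fin K → Fin d → ℝ) (hx : ∀ k, Real.sqrt (x k ⬝ᵥ x k) ≤ L)
    (Z : Fin K → Matrix (Fin d) (Fin d) ℝ)
    (hZ : ∀ k, Z k = lam • (1 : Matrix (Fin d) (Fin d) ℝ) +
      ∑ i ∈ Finset.univ.filter (fun i => i < k), vecMulVec (x i) (x i)) :
    ∑ k, min 1 (x k ⬝ᵥ (Z k)⁻¹.mulVec (x k)) ≤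
      2 * d * Real.log (1 + K * L ^ 2 / (d * lam)) := by
  have : Nonempty (Fin d) := Fin.pos_iff_nonempty.mp hd
  have hZ_eq : ∀ k, Z k = regGram lam x k := hZ
  set q : Fin K → ℝ := fun k ↦ x k ⬝ᵥ (regGram lam x k)⁻¹ *ᵥ x k
  have hq : ∀ k, 0 ≤ q k := fun k ↦ by
    simpa using (posDef_regGram x hlam k).inv.posSemidef.dotProduct_mulVec_nonneg (x k)
  set S := ∑ k, x k ⬝ᵥ x k
  have hS : 0 ≤ S := sum_nonneg fun k _ ↦ by simpa using dotProduct_self_star_nonneg (x k)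
  have hSL : S ≤ K * L ^ 2 := by
    simpa using sum_le_sum (s := univ) fun k _ ↦ (Real.sqrt_le_iff.mp (hx k)).2
  calc ∑ k, min 1 (x k ⬝ᵥ (Z k)⁻¹ *ᵥ x k) = ∑ k, min 1 (q k) := by simp_rw [hZ_eq]; rfl
    _ ≤ ∑ k, 2 * Real.log (1 + q k) :=
      sum_le_sum fun k _ ↦ Real.min_one_le_two_mul_log_one_add (hq k)
    _ = 2 * Real.log (∏ k, (1 + q k)) := by
      rw [Real.log_prod fun k _ ↦ by linarith [hq k], mul_sum]
    _ ≤ 2 * Real.log ((1 + S / (d * lam)) ^ d) := by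
      gcongr
      · exact prod_pos fun k _ ↦ by linarith [hq k]
      · simpa using prod_one_add_quadForm_regGram_le x hlam
    _ = 2 * d * Real.log (1 + S / (d * lam)) := by rw [Real.log_pow]; ring
    _ ≤ 2 * d * Real.log (1 + K * L ^ 2 / (d * lam)) := by gcongr

theorem stmt_3 (d K : ℕ) (hd : 0 < d) (lam L : ℝ) (hlam : 0 < lam) (hL : 0 < L)
    (x : Fin K → Fin d → ℝ) (hx : ∀ k, Real.sqrt (x k ⬝ᵥ x k) ≤ L)
    (Z : Fin K → Matrix (Fin d) (Fin d) ℝ)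
    (hZ : ∀ k, Z k = lam • (1 : Matrix (Fin d) (Fin d) ℝ) +
      ∑ i ∈ Finset.univ.filter (fun i => i < k), vecMulVec (x i) (x i)) :
    ∑ k, min 1 (x k ⬝ᵥ (Z k)⁻¹.mulVec (x k)) ≤
      2 * d * Real.log (1 + K * L ^ 2 / (d * lam)) :=
  stmt_3_general d K hd lam L hlam x hx Z hZ
end

section
/- Suppose A, B ∈ ℝ^{d×d} are positive definite matrices with A ⪰ B (i.e., A - B is positive semidefinite). Then for any x ∈ ℝ^d, ‖x‖_{A^{-1}} ≤ ‖x‖_{B^{-1}} · √(det(A)/det(B)). -/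
/-!
For positive definite `B`, `x ⬝ᵥ B⁻¹ *ᵥ x` is the maximum over `y` of `2 (x ⬝ᵥ y) - y ⬝ᵥ B *ᵥ y`
(attained at `y = B⁻¹ *ᵥ x`), which is antitone in `B`; hence `A ⪰ B` gives
`x ⬝ᵥ A⁻¹ *ᵥ x ≤ x ⬝ᵥ B⁻¹ *ᵥ x`. Conjugating by `S = √B` turns `A ⪰ B` into `C = S⁻¹ A S⁻¹ ⪰ 1`,
whose eigenvalues are all at least `1`, so `det A / det B = det C ≥ 1`.
-/

open Matrix

namespace Matrix

variable {n : Type*} [Fintype n] [DecidableEq n]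

lemma PosDef.mulVec_inv_mulVec {B : Matrix n n ℝ} (hB : B.PosDef) (x : n → ℝ) :
    B *ᵥ B⁻¹ *ᵥ x = x := by
  rw [mulVec_mulVec, mul_nonsing_inv _ ((isUnit_iff_isUnit_det B).mp hB.isUnit), one_mulVec]

lemma PosDef.two_mul_dotProduct_sub_le_dotProduct_inv_mulVec {B : Matrix n n ℝ} (hB : B.PosDef)
    (x y : n → ℝ) : 2 * (x ⬝ᵥ y) - y ⬝ᵥ B *ᵥ y ≤ x ⬝ᵥ B⁻¹ *ᵥ x := by
  set z := B⁻¹ *ᵥ x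
  have hBz : B *ᵥ z = x := hB.mulVec_inv_mulVec x
  have hBt : Bᵀ = B := by simpa using hB.isHermitian.eq
  have hzB : z ᵥ* B = x := by rw [← mulVec_transpose, hBt, hBz]
  have h := hB.posSemidef.dotProduct_mulVec_nonneg (y - z)
  simp only [star_trivial, mulVec_sub, dotProduct_sub, sub_dotProduct, hBz] at h
  rw [dotProduct_mulVec z, hzB, dotProduct_comm y x, dotProduct_comm z x] at h
  linarith

lemma PosDef.dotProduct_inv_mulVec_le {A B : Matrix n n ℝ} (hB : B.PosDef)
    (hAB : (A - B).PosSemidef) (x : n → ℝ) : x ⬝ᵥ A⁻¹ *ᵥ x ≤ x ⬝ᵥ B⁻¹ *ᵥ x := by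
  have hA : A.PosDef := by simpa using hB.add_posSemidef hAB
  set y := A⁻¹ *ᵥ x
  have hyAy : y ⬝ᵥ A *ᵥ y = x ⬝ᵥ y := by
    rw [hA.mulVec_inv_mulVec, dotProduct_comm]
  have hyBy : y ⬝ᵥ B *ᵥ y ≤ y ⬝ᵥ A *ᵥ y := by
    simpa [sub_mulVec] using hAB.dotProduct_mulVec_nonneg y
  linarith [hB.two_mul_dotProduct_sub_le_dotProduct_inv_mulVec x y]

lemma one_le_det_of_posSemidef_sub_one {C : Matrix n n ℝ} (h : (C - 1).PosSemidef) :
    1 ≤ C.det := by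
  have hC : C.IsHermitian := by simpa using h.isHermitian.add isHermitian_one
  have one_le_eigenvalues (i : n) : 1 ≤ hC.eigenvalues i := by
    set v : n → ℝ := ⇑(hC.eigenvectorBasis i)
    have hvv : v ⬝ᵥ v = 1 := by
      have h_norm := real_inner_self_eq_norm_sq (hC.eigenvectorBasis i)
      rw [hC.eigenvectorBasis.orthonormal.norm_eq_one,
        EuclideanSpace.inner_eq_star_dotProduct] at h_norm
      simpa using h_norm
    have hv_nonneg := h.dotProduct_mulVec_nonneg v
    simp only [star_trivial, sub_mulVec, one_mulVec, dotProduct_sub, hvv] at hv_nonneg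
    have hv_eigen := hC.eigenvalues_eq i
    simp only [star_trivial, RCLike.re_to_real] at hv_eigen
    linarith
  rw [hC.det_eq_prod_eigenvalues]
  exact Finset.one_le_prod fun i _ => by simpa using one_le_eigenvalues i

open scoped MatrixOrder in
lemma PosDef.det_le_det_of_posSemidef_sub {A B : Matrix n n ℝ} (hB : B.PosDef)
    (hAB : (A - B).PosSemidef) : B.det ≤ A.det := by
  set S := CFC.sqrt B
  have hS : Sᴴ = S := (CFC.sqrt_nonneg B).posSemidef.isHermitian.eq
  have hSS : S * S = B := CFC.sqrt_mul_sqrt_self B hB.posSemidef.nonneg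
  have hS_det : IsUnit S.det := by
    refine isUnit_iff_ne_zero.mpr fun h => hB.det_pos.ne' ?_
    rw [← hSS, det_mul, h, zero_mul]
  set C := S⁻¹ * A * S⁻¹
  have hAC : A = S * C * S := by
    simp only [C, ← mul_assoc, mul_nonsing_inv _ hS_det, one_mul]
    rw [mul_assoc, nonsing_inv_mul _ hS_det, mul_one]
  have hC : (C - 1).PosSemidef := by
    have hC1 : C - 1 = (S⁻¹)ᴴ * (A - B) * S⁻¹ := by
      rw [conjTranspose_nonsing_inv, hS, Matrix.mul_sub, Matrix.sub_mul, ← hSS, ← mul_assoc,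
        nonsing_inv_mul _ hS_det, one_mul, mul_nonsing_inv _ hS_det]
    rw [hC1]
    exact hAB.conjTranspose_mul_mul_same _
  calc B.det = B.det * 1 := (mul_one _).symm
    _ ≤ B.det * C.det := by gcongr; exacts [hB.det_pos.le, one_le_det_of_posSemidef_sub_one hC]
    _ = (S * C * S).det := by
      rw [← hSS, det_mul S S, det_mul (S * C) S, det_mul S C, mul_right_comm]
    _ = A.det := by rw [← hAC]

end Matrix

theorem stmt_4_general (d : ℕ) (A B : Matrix (Fin d) (Fin d) ℝ) (hB : B.PosDef)
    (hAB : (A - B).PosSemidef) (x : Fin d → ℝ) :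
    Real.sqrt (x ⬝ᵥ A⁻¹.mulVec x) ≤
      Real.sqrt (x ⬝ᵥ B⁻¹.mulVec x) * Real.sqrt (A.det / B.det) := by
  have h_quad := Real.sqrt_le_sqrt (hB.dotProduct_inv_mulVec_le hAB x)
  have h_det : 1 ≤ Real.sqrt (A.det / B.det) :=
    Real.one_le_sqrt.mpr ((one_le_div hB.det_pos).mpr (hB.det_le_det_of_posSemidef_sub hAB))
  exact h_quad.trans (le_mul_of_one_le_right (Real.sqrt_nonneg _) h_det)

theorem stmt_4 (d : ℕ) (A B : Matrix (Fin d) (Fin d) ℝ) (hA : A.PosDef) (hB : B.PosDef)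
    (hAB : (A - B).PosSemidef) (x : Fin d → ℝ) :
    Real.sqrt (x ⬝ᵥ A⁻¹.mulVec x) ≤
      Real.sqrt (x ⬝ᵥ B⁻¹.mulVec x) * Real.sqrt (A.det / B.det) :=
  stmt_4_general d A B hB hAB x
end

section
/- Let M, v > 0 be constants, {G_i} a filtration, and {x_i}_{i=1}^n a stochastic process with x_i being G_i-measurable, E[x_i | G_{i-1}] = 0, |x_i| ≤ M almost surely, and ∑_{i=1}^n E[x_i² | G_{i-1}] ≤ v almost surely. Then for any δ ∈ (0,1), with probability at least 1 - δ, ∑_{i=1}^n x_i ≤ √(2 v log(1/δ)) + (2/3) M log(1/δ). -/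
/-!
For `|y| ≤ c < 3`, comparing the exponential series with a geometric one gives the Bernstein
bound `exp y ≤ 1 + y + y² / (2 (1 - c / 3))`. Conditioning on `𝒢 i` and using `E[x_i | 𝒢 i] = 0`,
it makes `exp (l Sₙ - g l² ⟨S⟩ₙ)` a supermartingale started at `1`, where `⟨S⟩ₙ` is the sum of the
conditional variances. Chernoff's bound together with `⟨S⟩ₙ ≤ v` then gives
`P(Sₙ ≥ t) ≤ exp (-t² / (2 (v + M t / 3)))`, and at `t = √(2 v L) + 2 M L / 3` with
`L = log (1 / δ)` the exponent is at least `L`.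
-/

open MeasureTheory ProbabilityTheory Finset Real
open scoped Nat

theorem Nat.two_mul_three_pow_le_factorial_add_two (n : ℕ) : 2 * 3 ^ n ≤ (n + 2)! := by
  induction n with
  | zero => decide
  | succ n ih =>
    rw [Nat.factorial_succ, pow_succ]
    nlinarith

theorem Real.exp_le_one_add_add_sq_div {c x : ℝ} (hc : c < 3) (hx : |x| ≤ c) :
    exp x ≤ 1 + x + x ^ 2 / (2 * (1 - c / 3)) := by
  have htail : HasSum (fun n => x ^ (n + 2) / (n + 2)!) (exp x - 1 - x) := by
    simpa [Real.exp_eq_exp_ℝ, sum_range_succ, sub_sub] using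
      (hasSum_nat_add_iff' 2).2 (NormedSpace.expSeries_div_hasSum_exp x)
  have hgeom : HasSum (fun n : ℕ => x ^ 2 / 2 * (c / 3) ^ n) (x ^ 2 / 2 * (1 - c / 3)⁻¹) :=
    (hasSum_geometric_of_lt_one (by linarith [abs_nonneg x]) (by linarith)).mul_left _
  have hterm (n : ℕ) : x ^ (n + 2) / (n + 2)! ≤ x ^ 2 / 2 * (c / 3) ^ n := by
    have hfact : (2 * 3 ^ n : ℝ) ≤ (n + 2)! := by
      exact_mod_cast Nat.two_mul_three_pow_le_factorial_add_two n
    calc x ^ (n + 2) / (n + 2)! ≤ |x| ^ (n + 2) / (2 * 3 ^ n) := by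
          rw [← abs_pow]
          gcongr
          exact le_abs_self _
      _ = x ^ 2 / 2 * (|x| / 3) ^ n := by
          rw [pow_add, ← sq_abs x, div_pow]
          ring
      _ ≤ x ^ 2 / 2 * (c / 3) ^ n := by gcongr
  have hsum : x ^ 2 / 2 * (1 - c / 3)⁻¹ = x ^ 2 / (2 * (1 - c / 3)) := by
    rw [← div_eq_mul_inv, div_div]
  linarith [hasSum_le hterm htail hgeom]

section ConditionalBernstein

variable {Ω : Type*} {m m₀ : MeasurableSpace Ω} {μ : Measure Ω} [IsFiniteMeasure μ]

theorem condExp_exp_mul_le_exp (hm : m ≤ m₀) {X : Ω → ℝ} {M l g : ℝ}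
    (hX : AEStronglyMeasurable X μ) (hbdd : ∀ᵐ ω ∂μ, |X ω| ≤ M) (hmean : μ[X | m] =ᵐ[μ] 0)
    (hl : 0 ≤ l) (hexp : ∀ y, |y| ≤ l * M → exp y ≤ 1 + y + g * y ^ 2) :
    μ[fun ω => exp (l * X ω) | m] ≤ᵐ[μ] fun ω => exp (g * l ^ 2 * μ[fun ω => X ω ^ 2 | m] ω) := by
  have hX_int : Integrable X μ := .of_bound hX M (by simpa only [Real.norm_eq_abs] using hbdd)
  have hX2_int : Integrable (fun ω => X ω ^ 2) μ := by
    refine .of_bound (hX.pow 2) (M ^ 2) ?_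
    filter_upwards [hbdd] with ω hω
    rw [Real.norm_eq_abs, abs_pow]
    exact pow_le_pow_left₀ (abs_nonneg _) hω 2
  have hexp_int : Integrable (fun ω => exp (l * X ω)) μ :=
    integrable_exp_mul_of_le l M hl hX.aemeasurable (hbdd.mono fun _ h => (le_abs_self _).trans h)
  have hquad : (fun ω => exp (l * X ω)) ≤ᵐ[μ] fun ω => 1 + l * X ω + g * l ^ 2 * X ω ^ 2 := by
    filter_upwards [hbdd] with ω hω
    have := hexp (l * X ω) <| by
      rw [abs_mul, abs_of_nonneg hl]
      exact mul_le_mul_of_nonneg_left hω hl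
    linarith
  have hquad_int : Integrable (fun ω => 1 + l * X ω + g * l ^ 2 * X ω ^ 2) μ :=
    ((integrable_const 1).add (hX_int.const_mul l)).add (hX2_int.const_mul _)
  have hcondExp_quad : μ[fun ω => 1 + l * X ω + g * l ^ 2 * X ω ^ 2 | m]
      =ᵐ[μ] fun ω => 1 + g * l ^ 2 * μ[fun ω => X ω ^ 2 | m] ω := by
    rw [show (fun ω => 1 + l * X ω + g * l ^ 2 * X ω ^ 2)
      = (fun _ => (1 : ℝ)) + l • X + (g * l ^ 2) • fun ω => X ω ^ 2 from rfl]
    filter_upwards [condExp_add ((integrable_const 1).add (hX_int.smul l))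
        (hX2_int.smul (g * l ^ 2)) m, condExp_add (integrable_const 1) (hX_int.smul l) m,
      condExp_smul (μ := μ) l X m, condExp_smul (μ := μ) (g * l ^ 2) (fun ω => X ω ^ 2) m,
      hmean] with ω h1 h2 h3 h4 h5
    rw [h1, Pi.add_apply, h2, Pi.add_apply, h3, h4, condExp_const hm]
    simp [h5]
  filter_upwards [condExp_mono hexp_int hquad_int hquad, hcondExp_quad] with ω h1 h2
  rw [h2] at h1
  linarith [add_one_le_exp (g * l ^ 2 * μ[fun ω => X ω ^ 2 | m] ω)]

end ConditionalBernstein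

section FreedmanProcess

variable {Ω : Type*} {m : MeasurableSpace Ω} {μ : Measure Ω} {𝒢 : Filtration ℕ m}
  {x : ℕ → Ω → ℝ} {M l g : ℝ}

/-- `x i` is `𝒢 (i + 1)`-measurable, so `𝒢 i` plays the role of the paper's `G_{i-1}`. -/
noncomputable def predictableQuadVar (μ : Measure Ω) (𝒢 : Filtration ℕ m) (x : ℕ → Ω → ℝ)
    (n : ℕ) (ω : Ω) : ℝ :=
  ∑ i ∈ range n, μ[fun ω' => x i ω' ^ 2 | 𝒢 i] ω

noncomputable def freedmanProcess (μ : Measure Ω) (𝒢 : Filtration ℕ m) (x : ℕ → Ω → ℝ)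
    (l g : ℝ) (n : ℕ) (ω : Ω) : ℝ :=
  exp (l * ∑ i ∈ range n, x i ω - g * l ^ 2 * predictableQuadVar μ 𝒢 x n ω)

theorem predictableQuadVar_nonneg (n : ℕ) : 0 ≤ᵐ[μ] predictableQuadVar μ 𝒢 x n := by
  filter_upwards [ae_all_iff.2 fun i => condExp_nonneg (m := 𝒢 i) (μ := μ)
    (f := fun ω => x i ω ^ 2) (ae_of_all μ fun ω => sq_nonneg (x i ω))] with ω hω
  exact sum_nonneg fun i _ => hω i

theorem stronglyMeasurable_predictableQuadVar (n : ℕ) :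
    StronglyMeasurable[𝒢 n] (predictableQuadVar μ 𝒢 x n) :=
  Finset.stronglyMeasurable_fun_sum _ fun _ hi =>
    stronglyMeasurable_condExp.mono (𝒢.mono (mem_range.1 hi).le)

theorem freedmanProcess_zero : freedmanProcess μ 𝒢 x l g 0 = 1 := by
  ext ω
  simp [freedmanProcess, predictableQuadVar]

theorem freedmanProcess_succ (n : ℕ) :
    freedmanProcess μ 𝒢 x l g (n + 1) = (freedmanProcess μ 𝒢 x l g n *
      fun ω => exp (-(g * l ^ 2 * μ[fun ω' => x n ω' ^ 2 | 𝒢 n] ω))) *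
      fun ω => exp (l * x n ω) := by
  ext ω
  simp only [freedmanProcess, predictableQuadVar, Pi.mul_apply, ← exp_add, sum_range_succ]
  ring_nf

theorem stronglyAdapted_freedmanProcess (hmeas : ∀ i, StronglyMeasurable[𝒢 (i + 1)] (x i)) :
    StronglyAdapted 𝒢 (freedmanProcess μ 𝒢 x l g) := fun n =>
  continuous_exp.comp_stronglyMeasurable
    (((Finset.stronglyMeasurable_fun_sum _ fun i hi =>
      (hmeas i).mono (𝒢.mono (mem_range.1 hi))).const_mul l).sub
      (stronglyMeasurable_predictableQuadVar n |>.const_mul _))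

theorem freedmanProcess_le (hbdd : ∀ i, ∀ᵐ ω ∂μ, |x i ω| ≤ M) (hl : 0 ≤ l) (hg : 0 ≤ g)
    (n : ℕ) : ∀ᵐ ω ∂μ, freedmanProcess μ 𝒢 x l g n ω ≤ exp (l * (n * M)) := by
  filter_upwards [ae_all_iff.2 hbdd, predictableQuadVar_nonneg n] with ω hx hV
  have hS : ∑ i ∈ range n, x i ω ≤ n * M := by
    simpa using sum_le_sum fun i (_ : i ∈ range n) => (abs_le.1 (hx i)).2
  rw [freedmanProcess, exp_le_exp]
  have : 0 ≤ g * l ^ 2 * predictableQuadVar μ 𝒢 x n ω := mul_nonneg (by positivity) hV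
  nlinarith [mul_le_mul_of_nonneg_left hS hl]

theorem integrable_freedmanProcess [IsFiniteMeasure μ]
    (hmeas : ∀ i, StronglyMeasurable[𝒢 (i + 1)] (x i)) (hbdd : ∀ i, ∀ᵐ ω ∂μ, |x i ω| ≤ M)
    (hl : 0 ≤ l) (hg : 0 ≤ g) (n : ℕ) : Integrable (freedmanProcess μ 𝒢 x l g n) μ := by
  refine .of_bound (((stronglyAdapted_freedmanProcess hmeas n).mono (𝒢.le n)).aestronglyMeasurable)
    (exp (l * (n * M))) ?_
  filter_upwards [freedmanProcess_le (𝒢 := 𝒢) hbdd hl hg n] with ω hω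
  rwa [Real.norm_eq_abs, freedmanProcess, abs_exp]

theorem supermartingale_freedmanProcess [IsFiniteMeasure μ]
    (hmeas : ∀ i, StronglyMeasurable[𝒢 (i + 1)] (x i)) (hcond : ∀ i, μ[x i | 𝒢 i] =ᵐ[μ] 0)
    (hbdd : ∀ i, ∀ᵐ ω ∂μ, |x i ω| ≤ M) (hl : 0 ≤ l) (hg : 0 ≤ g)
    (hexp : ∀ y, |y| ≤ l * M → exp y ≤ 1 + y + g * y ^ 2) :
    Supermartingale (freedmanProcess μ 𝒢 x l g) 𝒢 μ := by
  refine supermartingale_nat (stronglyAdapted_freedmanProcess hmeas)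
    (integrable_freedmanProcess hmeas hbdd hl hg) fun n => ?_
  have hx_sm : StronglyMeasurable (x n) := (hmeas n).mono (𝒢.le _)
  have hprefactor : StronglyMeasurable[𝒢 n] (freedmanProcess μ 𝒢 x l g n *
      fun ω => exp (-(g * l ^ 2 * μ[fun ω' => x n ω' ^ 2 | 𝒢 n] ω))) :=
    (stronglyAdapted_freedmanProcess hmeas n).mul
      (continuous_exp.comp_stronglyMeasurable (stronglyMeasurable_condExp.const_mul _).neg)
  have hexp_int : Integrable (fun ω => exp (l * x n ω)) μ :=
    integrable_exp_mul_of_le l M hl hx_sm.aemeasurable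
      ((hbdd n).mono fun ω h => (le_abs_self _).trans h)
  rw [freedmanProcess_succ]
  filter_upwards [condExp_mul_of_stronglyMeasurable_left hprefactor
      (freedmanProcess_succ (μ := μ) n ▸ integrable_freedmanProcess hmeas hbdd hl hg (n + 1))
      hexp_int,
    condExp_exp_mul_le_exp (𝒢.le n) hx_sm.aestronglyMeasurable (hbdd n) (hcond n) hl hexp]
    with ω h1 h2
  rw [h1, Pi.mul_apply, Pi.mul_apply]
  calc _ ≤ freedmanProcess μ 𝒢 x l g n ω * exp (-(g * l ^ 2 * μ[fun ω' => x n ω' ^ 2 | 𝒢 n] ω)) *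
        exp (g * l ^ 2 * μ[fun ω' => x n ω' ^ 2 | 𝒢 n] ω) := by
        gcongr
        exact mul_nonneg (exp_nonneg _) (exp_nonneg _)
    _ = freedmanProcess μ 𝒢 x l g n ω := by
        rw [mul_assoc, ← exp_add, neg_add_cancel, exp_zero, mul_one]

theorem integral_freedmanProcess_le_one [IsProbabilityMeasure μ]
    (hmeas : ∀ i, StronglyMeasurable[𝒢 (i + 1)] (x i)) (hcond : ∀ i, μ[x i | 𝒢 i] =ᵐ[μ] 0)
    (hbdd : ∀ i, ∀ᵐ ω ∂μ, |x i ω| ≤ M) (hl : 0 ≤ l) (hg : 0 ≤ g)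
    (hexp : ∀ y, |y| ≤ l * M → exp y ≤ 1 + y + g * y ^ 2) (n : ℕ) :
    ∫ ω, freedmanProcess μ 𝒢 x l g n ω ∂μ ≤ 1 := by
  have := (supermartingale_freedmanProcess hmeas hcond hbdd hl hg hexp).setIntegral_le
    (Nat.zero_le n) MeasurableSet.univ
  simpa [freedmanProcess_zero] using this

end FreedmanProcess

theorem freedman_tail_bound {Ω : Type*} {m : MeasurableSpace Ω} {μ : Measure Ω}
    [IsProbabilityMeasure μ] {𝒢 : Filtration ℕ m} {x : ℕ → Ω → ℝ} {n : ℕ} {M v t : ℝ}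
    (hmeas : ∀ i, StronglyMeasurable[𝒢 (i + 1)] (x i)) (hcond : ∀ i, μ[x i | 𝒢 i] =ᵐ[μ] 0)
    (hbdd : ∀ i, ∀ᵐ ω ∂μ, |x i ω| ≤ M) (hvar : ∀ᵐ ω ∂μ, predictableQuadVar μ 𝒢 x n ω ≤ v)
    (hM : 0 ≤ M) (hv : 0 < v) (ht : 0 < t) :
    μ.real {ω | t ≤ ∑ i ∈ range n, x i ω} ≤ exp (-(t ^ 2 / (2 * (v + M * t / 3)))) := by
  set D := v + M * t / 3 with hD_def
  have hD : 0 < D := by positivity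
  -- `l = t / D` makes the exponent `t² / (2 D)`; since then `1 - l M / 3 = v / D`,
  -- the Bernstein bound holds with `g = D / (2 v)`.
  set l := t / D with hl_def
  set g := D / (2 * v) with hg_def
  have hl : 0 ≤ l := by positivity
  have hg : 0 ≤ g := by positivity
  have hexp (y : ℝ) (hy : |y| ≤ l * M) : exp y ≤ 1 + y + g * y ^ 2 := by
    have hc : l * M < 3 := by
      rw [hl_def, div_mul_eq_mul_div, div_lt_iff₀ hD]
      linarith
    convert exp_le_one_add_add_sq_div hc hy using 2
    rw [hg_def, hl_def, hD_def]
    field_simp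
    ring
  set X : Ω → ℝ := fun ω => ∑ i ∈ range n, x i ω - g * l * predictableQuadVar μ 𝒢 x n ω
  have hX : (fun ω => exp (l * X ω)) = freedmanProcess μ 𝒢 x l g n := by
    ext ω
    simp only [X, freedmanProcess]
    ring_nf
  have hchernoff := measure_ge_le_exp_mul_mgf (t - g * l * v) hl
    (hX ▸ integrable_freedmanProcess hmeas hbdd hl hg n)
  have hmgf : mgf X μ l ≤ 1 := by
    rw [mgf, hX]
    exact integral_freedmanProcess_le_one hmeas hcond hbdd hl hg hexp n
  have hexponent : -l * (t - g * l * v) = -(t ^ 2 / (2 * D)) := by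
    rw [hg_def, hl_def]
    field_simp
    ring
  have hsubset : {ω | t ≤ ∑ i ∈ range n, x i ω} ≤ᵐ[μ] {ω | t - g * l * v ≤ X ω} := by
    filter_upwards [hvar] with ω hω hS
    change t ≤ ∑ i ∈ range n, x i ω at hS
    change t - g * l * v ≤ X ω
    nlinarith [mul_le_mul_of_nonneg_left hω (mul_nonneg hg hl)]
  calc μ.real {ω | t ≤ ∑ i ∈ range n, x i ω} ≤ μ.real {ω | t - g * l * v ≤ X ω} :=
        ENNReal.toReal_mono (measure_ne_top _ _) (measure_mono_ae hsubset)
    _ ≤ exp (-l * (t - g * l * v)) * mgf X μ l := hchernoff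
    _ ≤ exp (-(t ^ 2 / (2 * D))) := by
        rw [hexponent]
        exact mul_le_of_le_one_right (exp_nonneg _) hmgf

theorem stmt_5 {Ω : Type*} {m : MeasurableSpace Ω} (μ : Measure Ω)
    [IsProbabilityMeasure μ] (𝒢 : Filtration ℕ m) (n : ℕ) (M v : ℝ)
    (hM : 0 < M) (hv : 0 < v) (x : ℕ → Ω → ℝ)
    (hmeas : ∀ i, StronglyMeasurable[𝒢 (i + 1)] (x i))
    (hcond : ∀ i, μ[x i | 𝒢 i] =ᵐ[μ] 0)
    (hbdd : ∀ i, ∀ᵐ ω ∂μ, |x i ω| ≤ M)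
    (hvar : ∀ᵐ ω ∂μ, ∑ i ∈ Finset.range n, (μ[fun ω' => (x i ω') ^ 2 | 𝒢 i]) ω ≤ v)
    (δ : ℝ) (hδ : δ ∈ Set.Ioo (0 : ℝ) 1) :
    ENNReal.ofReal (1 - δ) ≤
      μ {ω | ∑ i ∈ Finset.range n, x i ω ≤
        Real.sqrt (2 * v * Real.log (1 / δ)) + 2 / 3 * M * Real.log (1 / δ)} := by
  obtain ⟨hδ0, hδ1⟩ := hδ
  set s := Real.log (1 / δ) with hs_def
  have hs : 0 < s := Real.log_pos (one_lt_one_div hδ0 hδ1)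
  set T := √(2 * v * s) + 2 / 3 * M * s with hT_def
  have hT : 0 < T := by positivity
  have hsT : s ≤ T ^ 2 / (2 * (v + M * T / 3)) := by
    rw [le_div_iff₀ (by positivity)]
    have hgap : T ^ 2 - s * (2 * (v + M * T / 3)) = √(2 * v * s) * (2 / 3 * M * s) := by
      rw [hT_def]
      linear_combination Real.sq_sqrt (by positivity : 0 ≤ 2 * v * s)
    have : 0 ≤ √(2 * v * s) * (2 / 3 * M * s) := by positivity
    linarith
  have htail : μ.real {ω | T < ∑ i ∈ range n, x i ω} ≤ δ :=
    calc μ.real {ω | T < ∑ i ∈ range n, x i ω} ≤ μ.real {ω | T ≤ ∑ i ∈ range n, x i ω} :=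
          measureReal_mono (Set.ofPred_subset_ofPred.2 fun _ => le_of_lt)
      _ ≤ exp (-(T ^ 2 / (2 * (v + M * T / 3)))) :=
          freedman_tail_bound hmeas hcond hbdd hvar hM.le hv hT
      _ ≤ exp (-s) := exp_le_exp.2 (neg_le_neg hsT)
      _ = δ := by rw [hs_def, one_div, Real.log_inv, neg_neg, exp_log hδ0]
  have hcompl := probReal_compl_eq_one_sub (μ := μ) (measurableSet_le
    (Finset.measurable_sum _ fun i _ => ((hmeas i).mono (𝒢.le _)).measurable) measurable_const :
      MeasurableSet {ω | ∑ i ∈ range n, x i ω ≤ T})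
  rw [Set.compl_ofPred] at hcompl
  simp only [not_le] at hcompl
  rw [ENNReal.ofReal_le_iff_le_toReal (measure_ne_top _ _), ← measureReal_def]
  linarith
end

section
/- Let λ > 0, μ* ∈ ℝ^d, and x₁,…,x_k ∈ ℝ^d, η₁,…,η_k ∈ ℝ. Let y_i = ⟨μ*, x_i⟩ + η_i, Z_k = λI + ∑_{i=1}^k x_i x_iᵀ, b_k = ∑_{i=1}^k y_i x_i, and μ_k = Z_k^{-1} b_k. Then ‖μ_k - μ*‖_{Z_k} ≤ ‖∑_{i=1}^k x_i η_i‖_{Z_k^{-1}} + √λ ‖μ*‖₂. -/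
/-!
Substituting `y i = ⟪μ*, x i⟫ + η i` gives `b = Z μ* - λ μ* + S` with `S = ∑ η i • x i`, hence
`μ_k - μ* = Z⁻¹ (S - λ μ*)` and `‖μ_k - μ*‖_Z = ‖S - λ μ*‖_{Z⁻¹}`. The triangle inequality for
`‖·‖_{Z⁻¹}` splits this into the noise term and `λ ‖μ*‖_{Z⁻¹}`, and `Z ≥ λ I` gives
`λ ‖v‖²_{Z⁻¹} ≤ ‖v‖²`.
-/

open Matrix
open scoped MatrixOrder

namespace Matrix

variable {n : Type*} [Fintype n]

theorem PosSemidef.sqrt_dotProduct_mulVec_sub_le {M : Matrix n n ℝ} (hM : M.PosSemidef)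
    (u v : n → ℝ) :
    √((u - v) ⬝ᵥ M *ᵥ (u - v)) ≤ √(u ⬝ᵥ M *ᵥ u) + √(v ⬝ᵥ M *ᵥ v) := by
  have h := @norm_sub_le _ (M.toSeminormedAddCommGroup hM).toSeminormedAddGroup u v
  change √((M *ᵥ (u - v)) ⬝ᵥ star (u - v)) ≤
    √((M *ᵥ u) ⬝ᵥ star u) + √((M *ᵥ v) ⬝ᵥ star v) at h
  simpa only [dotProduct_comm (M *ᵥ _), star_trivial] using h

variable [DecidableEq n]

theorem inv_mulVec_dotProduct_mulVec_inv_mulVec {M : Matrix n n ℝ} (hM : IsUnit M.det)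
    (w : n → ℝ) : M⁻¹ *ᵥ w ⬝ᵥ M *ᵥ (M⁻¹ *ᵥ w) = w ⬝ᵥ M⁻¹ *ᵥ w := by
  rw [mulVec_mulVec, mul_nonsing_inv M hM, one_mulVec, dotProduct_comm]

theorem PosDef.mul_dotProduct_inv_mulVec_le {M : Matrix n n ℝ} (hM : M.PosDef) {lam : ℝ}
    (hlam : 0 ≤ lam) (hle : lam • 1 ≤ M) (v : n → ℝ) :
    lam * (v ⬝ᵥ M⁻¹ *ᵥ v) ≤ v ⬝ᵥ v := by
  set w := M⁻¹ *ᵥ v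
  have hvw : v ⬝ᵥ w = w ⬝ᵥ M *ᵥ w :=
    (inv_mulVec_dotProduct_mulVec_inv_mulVec hM.det_pos.ne'.isUnit v).symm
  have hww : lam * (w ⬝ᵥ w) ≤ w ⬝ᵥ M *ᵥ w := by
    have := (le_iff.mp hle).dotProduct_mulVec_nonneg w
    simp only [star_trivial, sub_mulVec, smul_mulVec, one_mulVec, dotProduct_sub,
      dotProduct_smul, smul_eq_mul] at this
    linarith
  -- `M⁻¹ ≤ lam⁻¹ • 1` without operator monotonicity of the inverse: expand `‖v - lam • w‖² ≥ 0`.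
  have hsq : 0 ≤ (v - lam • w) ⬝ᵥ (v - lam • w) := dotProduct_self_star_nonneg _
  simp only [sub_dotProduct, dotProduct_sub, smul_dotProduct, dotProduct_smul, smul_eq_mul,
    dotProduct_comm w v] at hsq
  nlinarith

end Matrix

section Ridge

variable {ι n : Type*} [Fintype ι] [Fintype n] [DecidableEq n]

def ridgeGram (lam : ℝ) (x : ι → n → ℝ) : Matrix n n ℝ :=
  lam • 1 + ∑ i, vecMulVec (x i) (x i)

theorem ridgeGram_mulVec (lam : ℝ) (x : ι → n → ℝ) (v : n → ℝ) :
    ridgeGram lam x *ᵥ v = lam • v + ∑ i, (x i ⬝ᵥ v) • x i := by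
  simp [ridgeGram, add_mulVec, smul_mulVec, sum_mulVec, vecMulVec_mulVec, dotProduct_comm]

theorem smul_one_le_ridgeGram (lam : ℝ) (x : ι → n → ℝ) : lam • 1 ≤ ridgeGram lam x := by
  rw [le_iff, ridgeGram, add_sub_cancel_left]
  exact posSemidef_sum _ fun i _ => posSemidef_vecMulVec_self_star (x i)

theorem ridgeGram_posDef {lam : ℝ} (hlam : 0 < lam) (x : ι → n → ℝ) :
    (ridgeGram lam x).PosDef :=
  (PosDef.one.smul hlam).add_posSemidef
    (posSemidef_sum _ fun i _ => posSemidef_vecMulVec_self_star (x i))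

theorem ridgeGram_inv_mulVec_sub {lam : ℝ} (hlam : 0 < lam) (x : ι → n → ℝ) (μ : n → ℝ)
    (η : ι → ℝ) :
    (ridgeGram lam x)⁻¹ *ᵥ (∑ i, (μ ⬝ᵥ x i + η i) • x i) - μ =
      (ridgeGram lam x)⁻¹ *ᵥ (∑ i, η i • x i - lam • μ) := by
  have hdet := (ridgeGram_posDef hlam x).det_pos.ne'.isUnit
  have hb : ∑ i, (μ ⬝ᵥ x i + η i) • x i =
      ridgeGram lam x *ᵥ μ + (∑ i, η i • x i - lam • μ) := by
    rw [ridgeGram_mulVec]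
    simp only [add_smul, Finset.sum_add_distrib, dotProduct_comm μ]
    abel
  rw [hb, mulVec_add, mulVec_mulVec, nonsing_inv_mul _ hdet, one_mulVec, add_sub_cancel_left]

end Ridge

theorem stmt_10 (d k : ℕ) (lam : ℝ) (hlam : 0 < lam) (μs : Fin d → ℝ)
    (x : Fin k → Fin d → ℝ) (η : Fin k → ℝ) (y : Fin k → ℝ)
    (hy : ∀ i, y i = μs ⬝ᵥ x i + η i)
    (Z : Matrix (Fin d) (Fin d) ℝ)
    (hZ : Z = lam • (1 : Matrix (Fin d) (Fin d) ℝ) + ∑ i, vecMulVec (x i) (x i))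
    (b : Fin d → ℝ) (hb : b = ∑ i, y i • x i)
    (μk : Fin d → ℝ) (hμk : μk = Z⁻¹.mulVec b) :
    Real.sqrt ((μk - μs) ⬝ᵥ Z.mulVec (μk - μs)) ≤
      Real.sqrt ((∑ i, η i • x i) ⬝ᵥ Z⁻¹.mulVec (∑ i, η i • x i)) +
        Real.sqrt lam * Real.sqrt (μs ⬝ᵥ μs) := by
  change Z = ridgeGram lam x at hZ
  obtain rfl : y = fun i => μs ⬝ᵥ x i + η i := funext hy
  subst hZ hb hμk
  have hZ := ridgeGram_posDef hlam x
  set S := ∑ i, η i • x i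
  have hbias : lam * (lam * (μs ⬝ᵥ (ridgeGram lam x)⁻¹ *ᵥ μs)) ≤ lam * (μs ⬝ᵥ μs) :=
    mul_le_mul_of_nonneg_left
      (hZ.mul_dotProduct_inv_mulVec_le hlam.le (smul_one_le_ridgeGram lam x) μs) hlam.le
  calc √((_ - μs) ⬝ᵥ ridgeGram lam x *ᵥ (_ - μs))
      = √((S - lam • μs) ⬝ᵥ (ridgeGram lam x)⁻¹ *ᵥ (S - lam • μs)) := by
        rw [ridgeGram_inv_mulVec_sub hlam,
          inv_mulVec_dotProduct_mulVec_inv_mulVec hZ.det_pos.ne'.isUnit]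
    _ ≤ √(S ⬝ᵥ (ridgeGram lam x)⁻¹ *ᵥ S) +
          √(lam • μs ⬝ᵥ (ridgeGram lam x)⁻¹ *ᵥ (lam • μs)) :=
        hZ.inv.posSemidef.sqrt_dotProduct_mulVec_sub_le _ _
    _ ≤ √(S ⬝ᵥ (ridgeGram lam x)⁻¹ *ᵥ S) + √lam * √(μs ⬝ᵥ μs) := by
        rw [← Real.sqrt_mul hlam.le]
        gcongr
        simpa only [mulVec_smul, smul_dotProduct, dotProduct_smul, smul_eq_mul] using hbias
end
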